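/- arXiv:2209.01366 — 5 statements merged into one kernel-verified Lean document; each statement's English description precedes it below -/
import Mathlib

section
/- Let r ≥ 1 and let F be a non-decreasing class of functions with |F| ≥ 2. Then opt_weak(CART_r(F)) < (r+1)·ln(|F|). -/
/-- `GuessForce ok V m` means: in the mistake-bound game with weak (yes/no) reinforcement
where queries have type `Q`, guesses have type `A`, and `ok q g f` says that guess `g` is a
correct answer to query `q` when the hidden target is `f`, an (adaptive) adversary whose
answers must stay consistent with some member of the current version space `V` can force
every deterministic learner to be answered "no" at least `m` times.
At each step the adversary chooses a query `q` and, depending on the learner's guess `g`,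
either answers "no" (`c g = true`, one more mistake, continuing from the consistent
functions for which the guess is wrong) or answers "yes" (`c g = false`, continuing from the
consistent functions for which the guess is correct). -/
inductive GuessForce {α Q A : Type*} (ok : Q → A → α → Prop) : Set α → ℕ → Prop where
  | zero (V : Set α) : V.Nonempty → GuessForce ok V 0
  | step (V : Set α) (m : ℕ) (q : Q) (c : A → Bool)
      (hne : ∀ g : A, (if c g then {f ∈ V | ¬ ok q g f} else {f ∈ V | ok q g f}).Nonempty)
      (h : ∀ g : A, GuessForce ok (if c g then {f ∈ V | ¬ ok q g f} else {f ∈ V | ok q g f})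
        (if c g then m else m + 1)) :
      GuessForce ok V (m + 1)

/-- `opt_weak(CART_r(F))`: the optimal worst-case number of mistakes in the `r`-input weak
reinforcement model, where in each round the adversary presents `r` inputs simultaneously,
the learner guesses all `r` outputs, and is only told whether all `r` guesses are correct. -/
noncomputable def optWeakCart {X Y : Type*} (r : ℕ) (F : Set (X → Y)) : ℕ :=
  sSup {m | GuessForce (fun (x : Fin r → X) (g : Fin r → Y) f => ∀ i, f (x i) = g i) F m}

/-!
Monotone Boolean functions on a linear order are pointwise comparable, so on the `r` queried
inputs the functions of the version space show at most `r + 1` distinct answer patterns.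
If the learner guesses the most frequent pattern, each "no" leaves at most an `r / (r + 1)`
share of the version space, so forcing `m` mistakes needs `(r + 1) ^ m ≤ r ^ m * |F|`,
i.e. `m * log (1 + 1 / r) ≤ log |F|`; finally `log (1 + 1 / r) > 1 / (r + 1)`.
-/

open Finset

theorem Monotone.le_or_le_of_bool {X : Type*} [LinearOrder X] {f g : X → Bool}
    (hf : Monotone f) (hg : Monotone g) : f ≤ g ∨ g ≤ f := by
  by_contra! h
  simp only [Pi.le_def, not_forall, not_le] at h
  obtain ⟨⟨a, ha⟩, ⟨b, hb⟩⟩ := h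
  rcases le_total a b with hab | hab
  · have := hf hab
    revert ha hb this; cases f a <;> cases f b <;> cases g a <;> cases g b <;> decide
  · have := hg hab
    revert ha hb this; cases f a <;> cases f b <;> cases g a <;> cases g b <;> decide

theorem card_le_of_isChain_pi_bool {ι : Type*} [Fintype ι] {T : Finset (ι → Bool)}
    (hT : IsChain (· ≤ ·) (T : Set (ι → Bool))) : #T ≤ Fintype.card ι + 1 := by
  classical
  set support : (ι → Bool) → Finset ι := fun v => {i | v i = true}
  have hmono : Monotone support := fun u v huv i => by
    simp only [support, mem_filter, mem_univ, true_and]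
    exact fun hu => Bool.le_iff_imp.mp (huv i) hu
  have support_inj : Function.Injective support := fun u v h => funext fun i => by
    have := Finset.ext_iff.mp h i
    simp only [support, mem_filter, mem_univ, true_and] at this
    exact Bool.eq_iff_iff.mpr this
  have hinj : Set.InjOn (fun v => #(support v)) T := by
    intro u hu v hv huv
    rcases hT.total hu hv with h | h
    · exact support_inj (eq_of_subset_of_card_le (hmono h) huv.ge)
    · exact support_inj (eq_of_subset_of_card_le (hmono h) huv.le).symm
  calc #T = #(T.image fun v => #(support v)) := (card_image_of_injOn hinj).symm
    _ ≤ #(range (Fintype.card ι + 1)) := card_le_card fun n hn => by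
        obtain ⟨v, -, rfl⟩ := mem_image.mp hn
        exact mem_range_succ_iff.mpr (card_le_univ _)
    _ = Fintype.card ι + 1 := card_range _

theorem Finset.exists_mul_card_filter_ne_le {α β : Type*} [DecidableEq β] [Nonempty β]
    (s : Finset α) (p : α → β) {k : ℕ} (hk : #(s.image p) ≤ k + 1) :
    ∃ y, (k + 1) * #{x ∈ s | p x ≠ y} ≤ k * #s := by
  rcases s.eq_empty_or_nonempty with rfl | hs
  · simp
  obtain ⟨y, -, hy⟩ := exists_le_card_fiber_of_nsmul_le_card_of_maps_to
    (fun a ha => mem_image_of_mem p ha) (hs.image p) (b := (#s : ℚ) / (k + 1)) (by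
      rw [nsmul_eq_mul, mul_div_assoc', div_le_iff₀ (by positivity), mul_comm]
      gcongr
      exact_mod_cast hk)
  refine ⟨y, ?_⟩
  have hsplit := card_filter_add_card_filter_not (s := s) (fun x => p x = y)
  rw [div_le_iff₀ (by positivity)] at hy
  have hy' : #s ≤ #{x ∈ s | p x = y} * (k + 1) := by exact_mod_cast hy
  nlinarith

theorem exists_guess_of_monotone {X ι : Type*} [LinearOrder X] [Fintype ι] {W : Set (X → Bool)}
    (hW : W.Finite) (hmono : ∀ f ∈ W, Monotone f) (q : ι → X) :
    ∃ g : ι → Bool,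
      (Fintype.card ι + 1) * {f ∈ W | ¬ ∀ i, f (q i) = g i}.ncard ≤
        Fintype.card ι * W.ncard := by
  classical
  have hchain : IsChain (· ≤ ·) (hW.toFinset.image (· ∘ q) : Set (ι → Bool)) := by
    intro u hu v hv _
    obtain ⟨f, hf, rfl⟩ := mem_image.mp hu
    obtain ⟨g, hg, rfl⟩ := mem_image.mp hv
    rw [Set.Finite.mem_toFinset] at hf hg
    exact ((hmono f hf).le_or_le_of_bool (hmono g hg)).imp
      (fun h i => h (q i)) (fun h i => h (q i))
  obtain ⟨g, hg⟩ :=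
    hW.toFinset.exists_mul_card_filter_ne_le (· ∘ q) (card_le_of_isChain_pi_bool hchain)
  refine ⟨g, ?_⟩
  have hwrong : {f ∈ W | ¬ ∀ i, f (q i) = g i} = ↑{f ∈ hW.toFinset | f ∘ q ≠ g} := by
    ext f
    simp [funext_iff]
  rwa [hwrong, Set.ncard_coe_finset, Set.ncard_eq_toFinset_card W hW]

theorem GuessForce.pow_le_pow_mul_ncard {α Q A : Type*} [Finite α] {ok : Q → A → α → Prop}
    {F : Set α} {k : ℕ}
    (hguess : ∀ W ⊆ F, ∀ q, ∃ g, (k + 1) * {f ∈ W | ¬ ok q g f}.ncard ≤ k * W.ncard)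
    {V : Set α} {m : ℕ} (h : GuessForce ok V m) (hV : V ⊆ F) :
    (k + 1) ^ m ≤ k ^ m * V.ncard := by
  induction h with
  | zero V hne =>
    rw [pow_zero, pow_zero, one_mul]
    exact (Set.ncard_pos (Set.toFinite V)).mpr hne
  | step V m q c _ _ ih =>
    obtain ⟨g, hg⟩ := hguess V hV q
    have ihg := ih g (by split <;> exact (Set.sep_subset _ _).trans hV)
    cases hc : c g <;> simp only [hc, Bool.false_eq_true, if_true, if_false] at ihg
    · calc (k + 1) ^ (m + 1) ≤ k ^ (m + 1) * {f ∈ V | ok q g f}.ncard := ihg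
        _ ≤ k ^ (m + 1) * V.ncard :=
          Nat.mul_le_mul_left _ (Set.ncard_le_ncard (Set.sep_subset _ _))
    · calc (k + 1) ^ (m + 1) = (k + 1) ^ m * (k + 1) := pow_succ _ _
        _ ≤ k ^ m * {f ∈ V | ¬ ok q g f}.ncard * (k + 1) := by gcongr
        _ = k ^ m * ((k + 1) * {f ∈ V | ¬ ok q g f}.ncard) := by ring
        _ ≤ k ^ m * (k * V.ncard) := by gcongr
        _ = k ^ (m + 1) * V.ncard := by ring

theorem Real.inv_add_one_lt_log_add_one_sub_log {x : ℝ} (hx : 0 < x) :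
    (x + 1)⁻¹ < Real.log (x + 1) - Real.log x := by
  have h := Real.log_lt_sub_one_of_pos (div_pos hx (by linarith : 0 < x + 1))
    (by rw [Ne, div_eq_one_iff_eq (by linarith)]; linarith)
  rw [Real.log_div hx.ne' (by linarith)] at h
  have : x / (x + 1) - 1 = -(x + 1)⁻¹ := by field_simp; ring
  linarith

theorem lt_mul_log_of_pow_le_pow_mul {k m n : ℕ} (h : (k + 1) ^ m ≤ k ^ m * n) (hn : 2 ≤ n) :
    (m : ℝ) < (k + 1) * Real.log n := by
  have hlog : 0 < Real.log n := Real.log_pos (by exact_mod_cast hn)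
  rcases m.eq_zero_or_pos with rfl | hm
  · rw [Nat.cast_zero]; positivity
  have hk : 0 < k := by
    rcases k with _ | k
    · simp [zero_pow hm.ne'] at h
    · omega
  have hmlog : m * (Real.log (k + 1) - Real.log k) ≤ Real.log n := by
    have hcast : ((k + 1 : ℕ) : ℝ) ^ m ≤ k ^ m * n := by exact_mod_cast h
    have := Real.log_le_log (by positivity) hcast
    rw [Real.log_mul (by positivity) (by positivity), Real.log_pow, Real.log_pow] at this
    push_cast at this
    linarith
  have hgap := Real.inv_add_one_lt_log_add_one_sub_log (x := (k : ℝ)) (by exact_mod_cast hk)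
  have : (m : ℝ) * ((k : ℝ) + 1)⁻¹ < Real.log n :=
    (mul_lt_mul_of_pos_left hgap (by exact_mod_cast hm)).trans_le hmlog
  rwa [← div_eq_mul_inv, div_lt_iff₀ (by positivity), mul_comm] at this

theorem stmt0_general {X : Type*} [Fintype X] [LinearOrder X] (r : ℕ)
    (F : Set (X → Bool)) (hmono : ∀ f ∈ F, Monotone f) (hF : 2 ≤ F.ncard) :
    (optWeakCart r F : ℝ) < ((r : ℝ) + 1) * Real.log F.ncard := by
  have hbound : ∀ m ∈ {m | GuessForce (fun (x : Fin r → X) (g : Fin r → Bool) f =>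
      ∀ i, f (x i) = g i) F m}, (m : ℝ) < (r + 1) * Real.log F.ncard := fun m hm =>
    lt_mul_log_of_pow_le_pow_mul (GuessForce.pow_le_pow_mul_ncard (fun W hW q => by
      simpa using exists_guess_of_monotone (Set.toFinite W) (fun f hf => hmono f (hW hf)) q)
      hm subset_rfl) hF
  have hne : F.Nonempty := Set.nonempty_of_ncard_ne_zero (by omega)
  refine hbound _ (Nat.sSup_mem ⟨0, .zero F hne⟩ ⟨⌈(r + 1) * Real.log F.ncard⌉₊, ?_⟩)
  exact fun m hm => Nat.cast_le.mp ((hbound m hm).le.trans (Nat.le_ceil _))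

/-- Let `r ≥ 1` and let `F` be a non-decreasing class of functions (a family
of monotone functions from a finite linearly ordered set `X` to `{0,1}`) with `|F| ≥ 2`.
Then `opt_weak(CART_r(F)) < (r+1)·ln |F|`. -/
theorem stmt0 {X : Type*} [Fintype X] [LinearOrder X] (r : ℕ) (hr : 1 ≤ r)
    (F : Set (X → Bool)) (hmono : ∀ f ∈ F, Monotone f) (hF : 2 ≤ F.ncard) :
    (optWeakCart r F : ℝ) < ((r : ℝ) + 1) * Real.log F.ncard :=
  stmt0_general r F hmono hF
end

section
/- Let r ≥ 1. For every ε > 0 there exists N such that for every non-decreasing class F with |F| ≥ N, opt_weak(CART_r(F)) ≥ (1−ε)·r·ln(|F|). -/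
universe u

/-!
A finite set of monotone functions `X → Bool` is a chain, so `r` well-chosen query points cut
`k` of them into `r + 1` consecutive blocks of at most `⌈k / (r + 1)⌉` functions, one block per
consistent answer pattern. The adversary asks these points and answers "no" to every guess,
which keeps at least `k - ⌈k / (r + 1)⌉` candidates. Hence `m` mistakes can be forced as long as
`(r + 1) ^ (m + 1) ≤ r ^ m * (|F| + r)`, that is for `m` up to roughly
`ln |F| / ln (1 + 1 / r) ≥ r ln |F|`.
-/

theorem Set.ncard_sep_add_ncard_sep_not {α : Type*} (s : Set α) (p : α → Prop)
    (hs : s.Finite := by toFinite_tac) :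
    {a ∈ s | p a}.ncard + {a ∈ s | ¬ p a}.ncard = s.ncard :=
  Set.ncard_inter_add_ncard_sdiff_eq_ncard s {a | p a} hs

theorem exists_eq_false_and_eq_true_of_lt {X : Type*} {f g : X → Bool} (h : f < g) :
    ∃ x, f x = false ∧ g x = true := by
  obtain ⟨-, x, hx⟩ := Pi.lt_def.mp h
  exact ⟨x, Bool.lt_iff.mp hx⟩

section MonotoneBool

variable {X : Type*} [LinearOrder X]

theorem Monotone.bool_le_total {f g : X → Bool} (hf : Monotone f) (hg : Monotone g) :
    f ≤ g ∨ g ≤ f := by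
  by_contra! h
  obtain ⟨⟨a, ha⟩, ⟨b, hb⟩⟩ : (∃ a, g a < f a) ∧ ∃ b, f b < g b := by
    simpa [Pi.le_def] using h
  rw [Bool.lt_iff] at ha hb
  rcases le_total a b with hab | hab
  · simpa [ha.2, hb.1, Bool.le_iff_imp] using hf hab
  · simpa [ha.1, hb.2, Bool.le_iff_imp] using hg hab

theorem Set.Finite.exists_greatest_of_monotone {V : Set (X → Bool)} (hfin : V.Finite)
    (hne : V.Nonempty) (hV : ∀ f ∈ V, Monotone f) : ∃ f ∈ V, ∀ g ∈ V, g ≤ f := by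
  obtain ⟨f, hf⟩ := hfin.exists_maximal hne
  refine ⟨f, hf.prop, fun g hg => ?_⟩
  rcases (hV g hg).bool_le_total (hV f hf.prop) with h | h
  · exact h
  · exact hf.le_of_ge hg h

variable [Finite X]

theorem exists_ncard_sep_eq_false_eq {V : Set (X → Bool)} (hV : ∀ f ∈ V, Monotone f) {s : ℕ}
    (hs : 0 < s) (hsV : s < V.ncard) : ∃ x, {f ∈ V | f x = false}.ncard = s := by
  obtain ⟨d, hd⟩ : ∃ d, V.ncard = s + 1 + d := ⟨V.ncard - (s + 1), by omega⟩
  -- Induct by removing the greatest function `top`. For `s = |V| - 1`, cut between `top` and the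
  -- next greatest function; otherwise `top` is true at any cut of `V \ {top}` at `s < |V \ {top}|`.
  induction d generalizing V with
  | zero =>
    obtain ⟨top, htop, hle⟩ := V.toFinite.exists_greatest_of_monotone
      (Set.nonempty_of_ncard_ne_zero (by omega)) hV
    obtain ⟨g, hg, hgle⟩ := (V \ {top}).toFinite.exists_greatest_of_monotone
      (Set.nonempty_of_ncard_ne_zero (by rw [Set.ncard_sdiff_singleton_of_mem htop]; omega))
      (fun f hf => hV f hf.1)
    obtain ⟨x, hgx, htopx⟩ :=
      exists_eq_false_and_eq_true_of_lt (lt_of_le_of_ne (hle g hg.1) hg.2)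
    have : {f ∈ V | f x = false} = V \ {top} := by
      ext f
      refine ⟨fun hf => ⟨hf.1, by rintro rfl; simp [htopx] at hf⟩, fun hf => ⟨hf.1, ?_⟩⟩
      simpa [hgx, Bool.le_iff_imp] using hgle f hf x
    refine ⟨x, ?_⟩
    rw [this, Set.ncard_sdiff_singleton_of_mem htop]
    omega
  | succ d ih =>
    obtain ⟨top, htop, hle⟩ := V.toFinite.exists_greatest_of_monotone
      (Set.nonempty_of_ncard_ne_zero (by omega)) hV
    have hW : (V \ {top}).ncard = s + 1 + d := by
      rw [Set.ncard_sdiff_singleton_of_mem htop]; omega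
    obtain ⟨x, hx⟩ := ih (fun f hf => hV f hf.1) (by omega) hW
    have htopx : top x = true := by
      by_contra! htopx
      have : {f ∈ V \ {top} | f x = false} = V \ {top} :=
        Set.sep_eq_self_iff_mem_true.mpr fun f hf => by
          simpa [htopx, Bool.le_iff_imp] using hle f hf.1 x
      rw [this] at hx
      omega
    refine ⟨x, ?_⟩
    rw [← hx]
    congr 1
    ext f
    simp only [Set.mem_sep_iff, Set.mem_sdiff, Set.mem_singleton_iff]
    grind

theorem exists_query_ncard_sep_le [Nonempty X] {V : Set (X → Bool)} (hV : ∀ f ∈ V, Monotone f)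
    (r : ℕ) {s : ℕ} (hs : 0 < s) (hVs : V.ncard ≤ (r + 1) * s) :
    ∃ q : Fin r → X, ∀ g : Fin r → Bool, {f ∈ V | ∀ i, f (q i) = g i}.ncard ≤ s := by
  induction r generalizing V with
  | zero =>
    exact ⟨Fin.elim0, fun g => (Set.ncard_le_ncard (Set.sep_subset _ _)).trans (by simpa using hVs)⟩
  | succ r ih =>
    by_cases hVs' : V.ncard ≤ s
    · exact ⟨fun _ => Classical.arbitrary X,
        fun g => (Set.ncard_le_ncard (Set.sep_subset _ _)).trans hVs'⟩
    -- The first query `x` isolates the `s` lowest functions; the others split the rest.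
    obtain ⟨x, hx⟩ := exists_ncard_sep_eq_false_eq hV hs (by omega)
    have hU : {f ∈ V | f x = true}.ncard ≤ (r + 1) * s := by
      have := Set.ncard_sep_add_ncard_sep_not V (fun f => f x = false)
      simp only [Bool.not_eq_false] at this
      rw [add_one_mul] at hVs
      omega
    obtain ⟨q, hq⟩ := ih (fun f hf => hV f hf.1) hU
    refine ⟨Fin.cons x q, fun g => ?_⟩
    cases hg : g 0
    · calc _ ≤ {f ∈ V | f x = false}.ncard :=
            Set.ncard_le_ncard fun f hf => ⟨hf.1, by simpa [hg] using hf.2 0⟩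
        _ = s := hx
    · calc _ ≤ {f ∈ {f ∈ V | f x = true} | ∀ i, f (q i) = g i.succ}.ncard :=
            Set.ncard_le_ncard fun f hf =>
              ⟨⟨hf.1, by simpa [hg] using hf.2 0⟩, fun i => by simpa using hf.2 i.succ⟩
        _ ≤ s := hq _

end MonotoneBool

namespace GuessForce
variable {α Q A : Type*} {ok : Q → A → α → Prop}

theorem nonempty [Nonempty A] {V : Set α} {m : ℕ} (h : GuessForce ok V m) : V.Nonempty := by
  cases h with
  | zero _ hne => exact hne
  | step _ _ q c hne _ =>
    exact (hne (Classical.arbitrary A)).mono (by split <;> exact Set.sep_subset _ _)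

theorem succ_of_forall_wrong {V : Set α} {m : ℕ} (q : Q)
    (h : ∀ g, GuessForce ok {f ∈ V | ¬ ok q g f} m) : GuessForce ok V (m + 1) :=
  step V m q (fun _ => true) (fun g => by have : Nonempty A := ⟨g⟩; simpa using (h g).nonempty)
    (fun g => by simpa using h g)

theorem le_ncard [Finite α] [Nonempty A] (hok : ∀ q f, ∃ g, ok q g f) {V : Set α} {m : ℕ}
    (h : GuessForce ok V m) : m ≤ V.ncard := by
  induction h with
  | zero => exact Nat.zero_le _
  | step V m q c hne h ih =>
    obtain ⟨f, hf⟩ := (step V m q c hne h).nonempty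
    obtain ⟨g, hg⟩ := hok q f
    specialize ih g
    cases hc : c g <;> simp only [hc, Bool.false_eq_true, ↓reduceIte] at ih
    · exact ih.trans (Set.ncard_le_ncard (Set.sep_subset _ _))
    · exact ih.trans_lt (Set.ncard_lt_ncard ⟨Set.sep_subset _ _, fun hsub => (hsub hf).2 hg⟩)

end GuessForce

theorem le_optWeakCart {X Y : Type*} [Finite X] [Finite Y] [Nonempty Y] {r m : ℕ}
    {F : Set (X → Y)}
    (h : GuessForce (fun (x : Fin r → X) (g : Fin r → Y) f => ∀ i, f (x i) = g i) F m) :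
    m ≤ optWeakCart r F :=
  le_csSup ⟨F.ncard, fun _ hm => hm.le_ncard fun q f => ⟨f ∘ q, fun _ => rfl⟩⟩ h

theorem guessForce_of_pow_le {X : Type*} [LinearOrder X] [Finite X] {r : ℕ} (hr : 0 < r)
    (m : ℕ) {V : Set (X → Bool)} (hV : ∀ f ∈ V, Monotone f)
    (hm : (r + 1) ^ (m + 1) ≤ r ^ m * (V.ncard + r)) :
    GuessForce (fun (x : Fin r → X) (g : Fin r → Bool) f => ∀ i, f (x i) = g i) V m := by
  induction m generalizing V with
  | zero =>
    simp only [zero_add, pow_one, pow_zero, one_mul] at hm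
    exact .zero V (Set.nonempty_of_ncard_ne_zero (by omega))
  | succ m ih =>
    set k := V.ncard
    have hk : 1 < k := by
      by_contra! hk
      have := calc (r + 1) ^ (m + 2) ≤ r ^ (m + 1) * (k + r) := hm
        _ ≤ r ^ (m + 1) * (r + 1) := Nat.mul_le_mul_left _ (by omega)
        _ < (r + 1) ^ (m + 1) * (r + 1) := by gcongr; omega
      rw [← pow_succ] at this
      exact lt_irrefl _ this
    have : Nonempty X := by
      obtain ⟨f, -, g, -, hfg⟩ := (Set.one_lt_ncard V.toFinite).mp hk
      exact ⟨(Function.ne_iff.mp hfg).choose⟩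
    have hdiv := Nat.div_add_mod (k + r) (r + 1)
    have hmod := Nat.mod_lt (k + r) (by omega : 0 < r + 1)
    set s := (k + r) / (r + 1)
    obtain ⟨q, hq⟩ := exists_query_ncard_sep_le hV r (Nat.div_pos (by omega) (by omega))
      (by omega : k ≤ (r + 1) * s)
    refine .succ_of_forall_wrong q fun g => ih (fun f hf => hV f hf.1) ?_
    set c := {f ∈ V | ∀ i, f (q i) = g i}.ncard
    set k' := {f ∈ V | ¬ ∀ i, f (q i) = g i}.ncard
    have hk' : c + k' = k := Set.ncard_sep_add_ncard_sep_not V _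
    have hcs : (r + 1) * c ≤ k + r :=
      (Nat.mul_le_mul_left _ (hq g)).trans (Nat.mul_div_le _ _)
    have hkk' : r * (k + r) ≤ (r + 1) * (k' + r) := by rw [← hk'] at hcs ⊢; nlinarith
    refine Nat.le_of_mul_le_mul_left ?_ r.succ_pos
    calc (r + 1) * (r + 1) ^ (m + 1) = (r + 1) ^ (m + 2) := by ring
      _ ≤ r ^ (m + 1) * (k + r) := hm
      _ = r ^ m * (r * (k + r)) := by ring
      _ ≤ r ^ m * ((r + 1) * (k' + r)) := by gcongr
      _ = (r + 1) * (r ^ m * (k' + r)) := by ring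

theorem pow_succ_le_of_log_le {r n : ℕ} (hr : 0 < r) (hn : 0 < n) {ε : ℝ}
    (hlog : Real.log (r + 1) + 1 ≤ ε * Real.log n) :
    (r + 1) ^ (⌈(1 - ε) * r * Real.log n⌉₊ + 1) ≤
      r ^ ⌈(1 - ε) * r * Real.log n⌉₊ * (n + r) := by
  set x := (1 - ε) * r * Real.log n
  set m := ⌈x⌉₊
  rcases lt_or_ge x 0 with hx | hx
  · simp only [m, Nat.ceil_eq_zero.mpr hx.le, zero_add, pow_one, pow_zero, one_mul]
    omega
  have hr' : (1 : ℝ) ≤ r := by exact_mod_cast hr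
  have hexp : (r + 1 : ℝ) * Real.exp (m / r) ≤ n := by
    rw [← Real.exp_log (by positivity : (0 : ℝ) < r + 1), ← Real.exp_add,
      ← Real.exp_log (by exact_mod_cast hn : (0 : ℝ) < n), Real.exp_le_exp]
    have : (m : ℝ) / r ≤ (1 - ε) * Real.log n + 1 := by
      rw [div_le_iff₀ (by positivity)]
      linarith [Nat.ceil_lt_add_one hx]
    linarith
  have hratio : ((r + 1 : ℝ) / r) ^ m ≤ Real.exp (m / r) :=
    calc ((r + 1 : ℝ) / r) ^ m ≤ Real.exp (1 / r) ^ m := by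
          gcongr
          rw [add_div, div_self (by positivity), add_comm]
          exact Real.add_one_le_exp _
      _ = Real.exp (m / r) := by rw [← Real.exp_nat_mul, mul_one_div]
  suffices ((r + 1) ^ (m + 1) : ℝ) ≤ r ^ m * n by
    have hle : (r ^ m * n : ℝ) ≤ r ^ m * (n + r) := by gcongr; simp
    exact_mod_cast this.trans hle
  calc ((r + 1) ^ (m + 1) : ℝ) = r ^ m * ((r + 1) * ((r + 1) / r) ^ m) := by
        rw [div_pow]; field_simp; ring
    _ ≤ r ^ m * ((r + 1) * Real.exp (m / r)) := by gcongr
    _ ≤ r ^ m * n := by gcongr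

/-- Let `r ≥ 1`. For every `ε > 0` there exists `N` such that for every
non-decreasing class `F` (a family of monotone functions from a finite linearly ordered set
`X` to `{0,1}`) with `|F| ≥ N`, `opt_weak(CART_r(F)) ≥ (1−ε)·r·ln |F|`. -/
theorem stmt1 (r : ℕ) (hr : 1 ≤ r) (ε : ℝ) (hε : 0 < ε) :
    ∃ N : ℕ, ∀ (X : Type u) [Fintype X] [LinearOrder X] (F : Set (X → Bool)),
      (∀ f ∈ F, Monotone f) → N ≤ F.ncard →
      (1 - ε) * r * Real.log F.ncard ≤ (optWeakCart r F : ℝ) := by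
  obtain ⟨N, hN⟩ : ∃ N : ℕ, ∀ n ≥ N, 0 < n ∧ Real.log (r + 1) + 1 ≤ ε * Real.log n := by
    have hlog := Real.tendsto_log_atTop.comp tendsto_natCast_atTop_atTop
    refine ((Filter.eventually_gt_atTop 0).and ?_).exists_forall_of_atTop
    filter_upwards [hlog.eventually_ge_atTop ((Real.log (r + 1) + 1) / ε)] with n hn
    exact (div_le_iff₀' hε).mp hn
  refine ⟨N, fun X _ _ F hF hFN => ?_⟩
  obtain ⟨hn, hlog⟩ := hN _ hFN
  calc (1 - ε) * r * Real.log F.ncard ≤ ⌈(1 - ε) * r * Real.log F.ncard⌉₊ := Nat.le_ceil _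
    _ ≤ optWeakCart r F := by
      exact_mod_cast le_optWeakCart
        (guessForce_of_pow_le hr _ hF (pow_succ_le_of_log_le hr hn hlog))
end

section
/- Let p be a prime and let n ≥ 2 and r ≥ 1 be integers. For every subset S ⊆ {1,…,p−1}^n there exist u_1,…,u_r ∈ {0,…,p−1}^n such that for every z = (z_1,…,z_r) ∈ {0,…,p−1}^r, |{x ∈ S : x·u_i ≡ z_i (mod p) for all 1 ≤ i ≤ r}| ≤ |S|/p^r + 2·√|S|. -/
lemma ker_count (p n : ℕ) [Fact p.Prime] (hn : 1 ≤ n) (a : Fin n → ZMod p) (ha : a ≠ 0) :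
    (Finset.univ.filter fun v : Fin n → ZMod p => ∑ j, a j * v j = 0).card = p ^ (n - 1) := by
  obtain ⟨j0, hj0⟩ : ∃ j, a j ≠ 0 := by
    by_contra h; push_neg at h; exact ha (funext h)
  set φ : (Fin n → ZMod p) →ₗ[ZMod p] ZMod p :=
    { toFun := fun v => ∑ j, a j * v j
      map_add' := by intro v w; simp [mul_add, Finset.sum_add_distrib]
      map_smul' := by intro c v; simp [Finset.mul_sum, mul_left_comm] } with hφ
  have hsurj : Function.Surjective φ := by
    intro c
    refine ⟨Pi.single j0 ((a j0)⁻¹ * c), ?_⟩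
    simp only [φ, LinearMap.coe_mk, AddHom.coe_mk, Pi.single_apply, mul_ite, mul_zero]
    rw [Finset.sum_ite_eq' Finset.univ j0]
    simp [← mul_assoc, ZMod.mul_inv_of_unit, hj0]
  have hcard : (Finset.univ.filter fun v : Fin n → ZMod p => ∑ j, a j * v j = 0).card
      = Nat.card (LinearMap.ker φ) := by
    rw [← Fintype.card_subtype, ← Nat.card_eq_fintype_card]
    exact Nat.card_congr (Equiv.subtypeEquivRight fun v => by
      simp [LinearMap.mem_ker, φ])
  have h1 : Nat.card (Fin n → ZMod p)
      = Nat.card (LinearMap.ker φ) * Nat.card ((Fin n → ZMod p) ⧸ LinearMap.ker φ) :=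
    Submodule.card_eq_card_quotient_mul_card _
  have h2 : Nat.card ((Fin n → ZMod p) ⧸ LinearMap.ker φ) = p := by
    rw [Nat.card_congr (φ.quotKerEquivOfSurjective hsurj).toEquiv]
    simp [Nat.card_eq_fintype_card]
  have h3 : Nat.card (Fin n → ZMod p) = p ^ n := by
    simp [Nat.card_eq_fintype_card]
  rw [hcard]
  have hp0 : 0 < p := (Fact.out : p.Prime).pos
  have key : p ^ n = Nat.card (LinearMap.ker φ) * p := by rw [← h3, h1, h2]
  have hn' : p ^ n = p ^ (n - 1) * p := by
    conv_lhs => rw [← Nat.sub_add_cancel hn, pow_succ]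
  rw [hn'] at key
  exact (Nat.eq_of_mul_eq_mul_right hp0 key).symm

lemma filter_pi_count {V : Type*} [Fintype V] [DecidableEq V] (r : ℕ) (P : V → Prop)
    [DecidablePred P] :
    (Finset.univ.filter fun u : Fin r → V => ∀ i, P (u i)).card
      = (Finset.univ.filter P).card ^ r := by
  rw [← Fintype.card_subtype, ← Fintype.card_subtype]
  rw [Fintype.card_congr (Equiv.subtypePiEquivPi (p := fun _ : Fin r => P))]
  simp [Fintype.card_pi]

/-- Let `p` be a prime, `n ≥ 2`, `r ≥ 1`. For every subset
`S ⊆ {1,…,p−1}^n` there exist `u₁,…,u_r ∈ {0,…,p−1}^n` such that for every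
`z = (z₁,…,z_r) ∈ {0,…,p−1}^r`,
`|{x ∈ S : x·uᵢ ≡ zᵢ (mod p) for all 1 ≤ i ≤ r}| ≤ |S|/p^r + 2·√|S|`. -/
theorem stmt7 (p n r : ℕ) (hp : p.Prime) (hn : 2 ≤ n) (hr : 1 ≤ r)
    (S : Finset (Fin n → ZMod p)) (hS : ∀ x ∈ S, ∀ j, x j ≠ 0) :
    ∃ u : Fin r → Fin n → ZMod p, ∀ z : Fin r → ZMod p,
      (((S.filter (fun x => ∀ i, ∑ j, x j * u i j = z i)).card : ℝ)) ≤
        (S.card : ℝ) / p ^ r + 2 * Real.sqrt S.card := by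
  classical
  haveI : Fact p.Prime := ⟨hp⟩
  have hn1 : 1 ≤ n := by omega
  have hp0 : (0:ℝ) < p := by exact_mod_cast hp.pos
  have hpr : (0:ℝ) < (p:ℝ) ^ r := by positivity
  set h : (Fin r → Fin n → ZMod p) → (Fin n → ZMod p) → (Fin r → ZMod p) :=
    fun u x i => ∑ j, x j * u i j with hh
  have hf' : ∀ (u : Fin r → Fin n → ZMod p) (z : Fin r → ZMod p),
      (S.filter (fun x => ∀ i, ∑ j, x j * u i j = z i)).card
        = ∑ x ∈ S, if h u x = z then 1 else 0 := by
    intro u z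
    rw [Finset.card_filter]
    exact Finset.sum_congr rfl fun x _ => if_congr (by simp [hh, funext_iff]) rfl rfl
  set f : (Fin r → Fin n → ZMod p) → (Fin r → ZMod p) → ℕ :=
    fun u z => ∑ x ∈ S, if h u x = z then 1 else 0 with hf
  set Q : (Fin r → Fin n → ZMod p) → ℕ :=
    fun u => ∑ x ∈ S, ∑ y ∈ S, if h u x = h u y then 1 else 0 with hQ
  -- sum of fibers
  have hA : ∀ u, ∑ z : Fin r → ZMod p, f u z = S.card := by
    intro u
    rw [hf]
    simp only
    rw [Finset.sum_comm]
    simp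
  -- sum of squared fibers
  have hB : ∀ u, ∑ z : Fin r → ZMod p, (f u z)^2 = Q u := by
    intro u
    have step1 : ∀ z : Fin r → ZMod p, (f u z)^2
        = ∑ x ∈ S, ∑ y ∈ S, if h u x = z ∧ h u y = z then 1 else 0 := by
      intro z
      rw [hf]
      simp only
      rw [sq, Finset.sum_mul_sum]
      exact Finset.sum_congr rfl fun x _ => Finset.sum_congr rfl fun y _ => by
        simp only [ite_mul, one_mul, zero_mul, ← ite_and]
    simp only [step1]
    rw [Finset.sum_comm]
    refine Finset.sum_congr rfl fun x _ => ?_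
    rw [Finset.sum_comm]
    refine Finset.sum_congr rfl fun y _ => ?_
    by_cases hxy : h u x = h u y
    · rw [if_pos hxy, hxy]
      simp
    · rw [if_neg hxy]
      refine Finset.sum_eq_zero fun z _ => ?_
      rw [if_neg]; rintro ⟨h1, h2⟩; exact hxy (h1.trans h2.symm)
  -- counting over u
  have hC : ∑ u : Fin r → Fin n → ZMod p, Q u
      ≤ S.card * (p^n)^r + S.card^2 * (p^(n-1))^r := by
    have swap : ∑ u : Fin r → Fin n → ZMod p, Q u
        = ∑ x ∈ S, ∑ y ∈ S, ∑ u : Fin r → Fin n → ZMod p,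
            if h u x = h u y then 1 else 0 := by
      rw [hQ]
      rw [Finset.sum_comm]
      exact Finset.sum_congr rfl fun x _ => Finset.sum_comm
    rw [swap]
    have key : ∀ x ∈ S, ∀ y ∈ S,
        (∑ u : Fin r → Fin n → ZMod p, if h u x = h u y then 1 else 0)
          ≤ if x = y then (p^n)^r else (p^(n-1))^r := by
      intro x hx y hy
      have hcount : (∑ u : Fin r → Fin n → ZMod p, if h u x = h u y then 1 else 0)
          = (Finset.univ.filter
              fun v : Fin n → ZMod p => ∑ j, x j * v j = ∑ j, y j * v j).card ^ r := by
        rw [← filter_pi_count r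
          (fun v : Fin n → ZMod p => ∑ j, x j * v j = ∑ j, y j * v j)]
        rw [Finset.card_filter]
        exact Finset.sum_congr rfl fun u _ => if_congr (by simp [hh, funext_iff]) rfl rfl
      rw [hcount]
      by_cases hxy : x = y
      · rw [if_pos hxy]
        refine Nat.pow_le_pow_left ?_ r
        refine le_trans (Finset.card_filter_le _ _) ?_
        simp [Fintype.card_pi]
      · rw [if_neg hxy]
        have heq : (Finset.univ.filter
            fun v : Fin n → ZMod p => ∑ j, x j * v j = ∑ j, y j * v j)
            = (Finset.univ.filter fun v : Fin n → ZMod p => ∑ j, (x - y) j * v j = 0) := by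
          refine Finset.filter_congr fun v _ => ?_
          have hd : ∑ j, (x - y) j * v j = (∑ j, x j * v j) - ∑ j, y j * v j := by
            simp [Pi.sub_apply, sub_mul, Finset.sum_sub_distrib]
          rw [hd]
          constructor
          · intro hv; rw [hv, sub_self]
          · intro hv; exact sub_eq_zero.mp hv
        have hker : (Finset.univ.filter
            fun v : Fin n → ZMod p => ∑ j, (x - y) j * v j = 0).card = p ^ (n - 1) :=
          ker_count p n hn1 (x - y) (sub_ne_zero.mpr hxy)
        rw [heq, hker]
    calc ∑ x ∈ S, ∑ y ∈ S, ∑ u : Fin r → Fin n → ZMod p,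
            (if h u x = h u y then 1 else 0)
        ≤ ∑ x ∈ S, ∑ y ∈ S, (if x = y then (p^n)^r else (p^(n-1))^r) := by
          refine Finset.sum_le_sum fun x hx => Finset.sum_le_sum fun y hy => key x hx y hy
      _ ≤ ∑ x ∈ S, ((p^n)^r + S.card * (p^(n-1))^r) := by
          refine Finset.sum_le_sum fun x hx => ?_
          calc ∑ y ∈ S, (if x = y then (p^n)^r else (p^(n-1))^r)
              ≤ ∑ y ∈ S, ((if x = y then (p^n)^r else 0) + (p^(n-1))^r) := by
                refine Finset.sum_le_sum fun y _ => ?_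
                by_cases hxy : x = y <;> simp [hxy]
            _ = (∑ y ∈ S, if x = y then (p^n)^r else 0) + S.card * (p^(n-1))^r := by
                rw [Finset.sum_add_distrib, Finset.sum_const, smul_eq_mul]
            _ ≤ (p^n)^r + S.card * (p^(n-1))^r := by
                gcongr
                rw [Finset.sum_ite_eq]
                split <;> simp
      _ = S.card * (p^n)^r + S.card^2 * (p^(n-1))^r := by
          rw [Finset.sum_const, smul_eq_mul]; ring
  -- averaging: pick a good u
  have hcardU : (Fintype.card (Fin r → Fin n → ZMod p) : ℝ) = ((p:ℝ)^n)^r := by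
    simp [Fintype.card_pi]
  obtain ⟨u, -, hu⟩ : ∃ u ∈ (Finset.univ : Finset (Fin r → Fin n → ZMod p)),
      (Q u : ℝ) ≤ (S.card : ℝ) + (S.card : ℝ)^2 / (p:ℝ)^r := by
    refine Finset.exists_le_of_sum_le Finset.univ_nonempty ?_
    rw [Finset.sum_const, nsmul_eq_mul, Finset.card_univ, hcardU]
    have hsum : (∑ u : Fin r → Fin n → ZMod p, (Q u : ℝ))
        ≤ (S.card : ℝ) * ((p:ℝ)^n)^r + (S.card : ℝ)^2 * ((p:ℝ)^(n-1))^r := by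
      rw [← Nat.cast_sum]
      calc ((∑ u : Fin r → Fin n → ZMod p, Q u : ℕ) : ℝ)
          ≤ ((S.card * (p^n)^r + S.card^2 * (p^(n-1))^r : ℕ) : ℝ) := by exact_mod_cast hC
        _ = (S.card : ℝ) * ((p:ℝ)^n)^r + (S.card : ℝ)^2 * ((p:ℝ)^(n-1))^r := by push_cast; ring
    refine hsum.trans (le_of_eq ?_)
    have hpow : ((p:ℝ)^(n-1))^r * (p:ℝ)^r = ((p:ℝ)^n)^r := by
      rw [← mul_pow, ← pow_succ, Nat.sub_add_cancel (by omega : 1 ≤ n)]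
    have h4 : ((p:ℝ)^(n-1))^r = ((p:ℝ)^n)^r / (p:ℝ)^r := by
      rw [eq_div_iff (ne_of_gt hpr)]; exact hpow
    rw [h4]
    field_simp
  refine ⟨u, fun z => ?_⟩
  rw [hf']
  -- variance bound
  set m : ℝ := (S.card : ℝ) / (p:ℝ)^r with hm
  have hcardZ : (Fintype.card (Fin r → ZMod p) : ℝ) = (p:ℝ)^r := by
    simp [Fintype.card_pi]
  have hvar : ((f u z : ℝ) - m)^2 ≤ (S.card : ℝ) := by
    have h1 : ((f u z : ℝ) - m)^2 ≤ ∑ z' : Fin r → ZMod p, ((f u z' : ℝ) - m)^2 :=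
      Finset.single_le_sum (f := fun z' => ((f u z' : ℝ) - m)^2)
        (fun z' _ => sq_nonneg _) (Finset.mem_univ z)
    have h2 : ∑ z' : Fin r → ZMod p, ((f u z' : ℝ) - m)^2
        = (∑ z' : Fin r → ZMod p, (f u z' : ℝ)^2) - (S.card : ℝ)^2 / (p:ℝ)^r := by
      have e0 : ∀ z' : Fin r → ZMod p, ((f u z' : ℝ) - m)^2
          = (f u z' : ℝ)^2 - 2*m*(f u z' : ℝ) + m^2 := fun z' => by ring
      have e1 : ∑ z' : Fin r → ZMod p, ((f u z' : ℝ) - m)^2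
          = (∑ z' : Fin r → ZMod p, (f u z' : ℝ)^2)
            - 2*m*(∑ z' : Fin r → ZMod p, (f u z' : ℝ))
            + (Fintype.card (Fin r → ZMod p) : ℝ) * m^2 := by
        simp only [e0]
        rw [Finset.sum_add_distrib, Finset.sum_sub_distrib, ← Finset.mul_sum,
          Finset.sum_const, nsmul_eq_mul, Finset.card_univ]
      have e2 : ∑ z' : Fin r → ZMod p, (f u z' : ℝ) = (S.card : ℝ) := by
        exact_mod_cast congrArg (Nat.cast : ℕ → ℝ) (hA u)
      rw [e1, e2, hcardZ, hm]
      field_simp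
      ring
    have h3 : (∑ z' : Fin r → ZMod p, (f u z' : ℝ)^2) ≤ (S.card:ℝ) + (S.card:ℝ)^2/(p:ℝ)^r := by
      have e3 : (∑ z' : Fin r → ZMod p, (f u z' : ℝ)^2) = (Q u : ℝ) := by
        exact_mod_cast congrArg (Nat.cast : ℕ → ℝ) (hB u)
      rw [e3]; exact hu
    calc ((f u z : ℝ) - m)^2 ≤ _ := h1
      _ = _ := h2
      _ ≤ (S.card:ℝ) + (S.card:ℝ)^2/(p:ℝ)^r - (S.card : ℝ)^2 / (p:ℝ)^r := by linarith
      _ = (S.card : ℝ) := by ring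
  have hfi : (f u z : ℝ) - m ≤ Real.sqrt (S.card) := by
    calc (f u z : ℝ) - m ≤ |(f u z : ℝ) - m| := le_abs_self _
      _ = Real.sqrt (((f u z : ℝ) - m)^2) := (Real.sqrt_sq_eq_abs _).symm
      _ ≤ Real.sqrt (S.card) := Real.sqrt_le_sqrt hvar
  have hs : (0:ℝ) ≤ Real.sqrt (S.card) := Real.sqrt_nonneg _
  have final : (f u z : ℝ) ≤ m + 2 * Real.sqrt (S.card) := by linarith
  exact final
end

section
/- Let r ≥ 1. For every ε > 0 there exists k₀ such that for every finite set Y with |Y| = k ≥ k₀, every set X, and every finite class F of functions from X to Y, opt_weak(CART_r(F)) ≤ (1+ε)·(k^r·r·ln k)·opt_std(F). -/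
/-- `StdForce V m`: in the standard model (the true value of the target at the queried input
is revealed after each guess), the adversary can force `m` mistakes against every learner,
staying consistent with the version space `V`. Here `yc g` is the value revealed when the
learner guesses `g` (a mistake iff `yc g ≠ g`, recorded by `c g`). -/
inductive StdForce {X Y : Type*} : Set (X → Y) → ℕ → Prop where
  | zero (V : Set (X → Y)) : V.Nonempty → StdForce V 0
  | step (V : Set (X → Y)) (m : ℕ) (x : X) (yc : Y → Y) (c : Y → Bool)
      (hmistake : ∀ g : Y, c g = true → yc g ≠ g)
      (hcorrect : ∀ g : Y, c g = false → yc g = g)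
      (hne : ∀ g : Y, {f ∈ V | f x = yc g}.Nonempty)
      (h : ∀ g : Y, StdForce {f ∈ V | f x = yc g} (if c g then m else m + 1)) :
      StdForce V (m + 1)

/-- `opt_std(F)`: the optimal worst-case number of mistakes in the standard model. -/
noncomputable def optStd {X Y : Type*} (F : Set (X → Y)) : ℕ :=
  sSup {m | StdForce F m}

universe u v

/-!
The learner runs weighted majority over experts. An expert is a subclass `G ⊆ F` together with
the number of mistakes it has been charged. On inputs `q`, at most one tuple of answers keeps
`opt_std(G)`: two such tuples differ at some coordinate, and asking that coordinate in the
standard model would cost one more mistake. Each expert predicts that tuple and the learner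
guesses a tuple of largest total weight, where an expert charged `j` mistakes weighs `c ^ j`.
After a "no", every expert that predicted the guess splits into one expert for each of the
other `K - 1` tuples (`K = k ^ r`), charged one more mistake and with strictly smaller
`opt_std`. So no expert is ever charged more than `opt_std(F)` mistakes, and the expert
containing the target keeps weight at least `c ^ opt_std(F)`. Since the guessed tuple has at
least `1 / K` of the weight, every "no" multiplies the total weight by at most
`1 - (1 - (K - 1) c) / K`. Taking `c = η / K` gives
`(1 - η) · opt_weak ≤ K log (K / η) · opt_std(F)`, and `log (K / η) = (1 + o(1)) log K`.
-/

namespace StdForce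

variable {X : Type u} {Y : Type v} {V W : Set (X → Y)} {m : ℕ}

theorem mono (h : StdForce V m) (hVW : V ⊆ W) : StdForce W m := by
  induction h generalizing W with
  | zero V hV => exact .zero W (hV.mono hVW)
  | step V m x yc c hm hc hne _ ih =>
    have hsub : ∀ g, {f ∈ V | f x = yc g} ⊆ {f ∈ W | f x = yc g} :=
      fun _ _ hf => ⟨hVW hf.1, hf.2⟩
    exact .step W m x yc c hm hc (fun g => (hne g).mono (hsub g)) (fun g => ih g (hsub g))

variable [Nonempty Y]

theorem nonempty (h : StdForce V m) : V.Nonempty := by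
  cases h with
  | zero V hV => exact hV
  | step V m x yc c hm hc hne _ => exact (hne (Classical.arbitrary Y)).mono (Set.sep_subset _ _)

theorem of_le (h : StdForce V m) {n : ℕ} (hnm : n ≤ m) : StdForce V n := by
  induction h generalizing n with
  | zero V hV => exact Nat.le_zero.mp hnm ▸ .zero V hV
  | step V m x yc c hm hc hne hbr ih =>
    match n with
    | 0 => exact .zero V (StdForce.step V m x yc c hm hc hne hbr).nonempty
    | n + 1 =>
      refine .step V n x yc c hm hc hne fun g => ?_
      have ihg := @ih g
      cases hcg : c g <;> simp only [hcg, Bool.false_eq_true, if_false, if_true] at ihg ⊢ <;>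
        exact ihg (by omega)

/-- Follow the branch of the guess `f x`: if it is a mistake, that branch loses `f`. -/
theorem lt_ncard (h : StdForce V m) (hV : V.Finite) : m < V.ncard := by
  induction h with
  | zero V hV' => exact (Set.ncard_pos hV).mpr hV'
  | step V m x yc c hm hc hne hbr ih =>
    obtain ⟨f, hfV, -⟩ := hne (Classical.arbitrary Y)
    have hsub : {f' ∈ V | f' x = yc (f x)} ⊆ V := Set.sep_subset _ _
    have ih' := ih (f x) (hV.subset hsub)
    cases hcg : c (f x)
    · simp only [hcg, Bool.false_eq_true, if_false] at ih'
      exact ih'.trans_le (Set.ncard_le_ncard hsub hV)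
    · simp only [hcg, if_true] at ih'
      have hf : f ∉ {f' ∈ V | f' x = yc (f x)} := fun hf => hm (f x) hcg hf.2.symm
      have := Set.ncard_lt_ncard ((Set.ssubset_iff_of_subset hsub).mpr ⟨f, hfV, hf⟩) hV
      omega

end StdForce

section OptStd

variable {X : Type u} {Y : Type v} [Nonempty Y] {V W : Set (X → Y)}

theorem bddAbove_stdForce (hV : V.Finite) : BddAbove {m | StdForce V m} :=
  ⟨V.ncard, fun _ hm => (hm.lt_ncard hV).le⟩

theorem StdForce.le_optStd (hV : V.Finite) {m : ℕ} (h : StdForce V m) : m ≤ optStd V :=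
  le_csSup (bddAbove_stdForce hV) h

theorem stdForce_optStd (hV : V.Finite) (hne : V.Nonempty) : StdForce V (optStd V) :=
  Nat.sSup_mem ⟨0, .zero V hne⟩ (bddAbove_stdForce hV)

theorem optStd_mono (hVW : V ⊆ W) (hW : W.Finite) : optStd V ≤ optStd W :=
  csSup_le_csSup' (bddAbove_stdForce hW) fun _ hm => hm.mono hVW

/-- The adversary asks `x` and always answers the value, `v₁` or `v₂`, that the guess missed. -/
theorem min_optStd_lt (hV : V.Finite) (x : X) {v₁ v₂ : Y} (hv : v₁ ≠ v₂)
    (h₁ : {f ∈ V | f x = v₁}.Nonempty) (h₂ : {f ∈ V | f x = v₂}.Nonempty) :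
    min (optStd {f ∈ V | f x = v₁}) (optStd {f ∈ V | f x = v₂}) < optStd V := by
  classical
  have hsub : ∀ v, {f ∈ V | f x = v} ⊆ V := fun _ => Set.sep_subset _ _
  refine Nat.lt_of_succ_le <| StdForce.le_optStd hV <|
    .step V _ x (fun g => if g = v₁ then v₂ else v₁) (fun _ => true) (fun g _ => ?_)
      (fun _ hg => nomatch hg) (fun g => ?_) (fun g => ?_)
  · split_ifs with h
    · exact fun he => hv (h ▸ he.symm)
    · exact fun he => h he.symm
  · split_ifs
    exacts [h₂, h₁]
  · simp only [if_true]
    split_ifs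
    · exact (stdForce_optStd (hV.subset (hsub _)) h₂).of_le (min_le_right _ _)
    · exact (stdForce_optStd (hV.subset (hsub _)) h₁).of_le (min_le_left _ _)

end OptStd

section Fiber

variable {X : Type u} {Y : Type v} {r : ℕ}

def tupleFiber (V : Set (X → Y)) (q : Fin r → X) (u : Fin r → Y) : Set (X → Y) :=
  {f ∈ V | ∀ i, f (q i) = u i}

theorem tupleFiber_subset (V : Set (X → Y)) (q : Fin r → X) (u : Fin r → Y) :
    tupleFiber V q u ⊆ V :=
  Set.sep_subset _ _

theorem tupleFiber_subset_coordFiber (V : Set (X → Y)) (q : Fin r → X) (u : Fin r → Y)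
    (i : Fin r) : tupleFiber V q u ⊆ {f ∈ V | f (q i) = u i} :=
  fun _ hf => ⟨hf.1, hf.2 i⟩

theorem exists_optStd_tupleFiber_lt [Nonempty Y] {V : Set (X → Y)} (hV : V.Finite)
    (q : Fin r → X) : ∃ g : Fin r → Y, ∀ u ≠ g, (tupleFiber V q u).Nonempty →
      optStd (tupleFiber V q u) < optStd V := by
  by_cases hkeep : ∃ g, (tupleFiber V q g).Nonempty ∧ optStd V ≤ optStd (tupleFiber V q g)
  · obtain ⟨g, hg, hgopt⟩ := hkeep
    refine ⟨g, fun u hu hne => ?_⟩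
    obtain ⟨i, hi⟩ := Function.ne_iff.mp hu
    have hcoord := tupleFiber_subset_coordFiber V q
    have hfin (v : Fin r → Y) : {f ∈ V | f (q i) = v i}.Finite := hV.subset (Set.sep_subset _ _)
    have hg' : optStd V ≤ optStd {f ∈ V | f (q i) = g i} :=
      hgopt.trans (optStd_mono (hcoord g i) (hfin g))
    have hmin := min_optStd_lt hV (q i) hi (hne.mono (hcoord u i)) (hg.mono (hcoord g i))
    exact (optStd_mono (hcoord u i) (hfin u)).trans_lt
      ((min_lt_iff.mp hmin).resolve_right hg'.not_gt)
  · push Not at hkeep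
    exact ⟨Classical.arbitrary _, fun u _ hne => hkeep u hne⟩

end Fiber

section Experts

variable {X : Type u} {Y : Type v} {r : ℕ}

/-- An expert `p` is a subclass `p.1` of the target class that has been charged `p.2`
mistakes. -/
def expertWeight (c : ℝ) (E : Multiset (Set (X → Y) × ℕ)) : ℝ :=
  (E.map fun p => c ^ p.2).sum

def fiberWeight {A : Type*} [DecidableEq A] (c : ℝ) (κ : Set (X → Y) × ℕ → A) (g : A)
    (E : Multiset (Set (X → Y) × ℕ)) : ℝ :=
  (E.map fun p => if κ p = g then c ^ p.2 else 0).sum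

theorem expertWeight_nonneg {c : ℝ} (hc : 0 ≤ c) (E : Multiset (Set (X → Y) × ℕ)) :
    0 ≤ expertWeight c E :=
  Multiset.sum_nonneg fun _ hx => by
    obtain ⟨p, -, rfl⟩ := Multiset.mem_map.mp hx
    exact pow_nonneg hc _

theorem pow_le_expertWeight {c : ℝ} (hc : 0 ≤ c) {E : Multiset (Set (X → Y) × ℕ)}
    {p : Set (X → Y) × ℕ} (hp : p ∈ E) : c ^ p.2 ≤ expertWeight c E :=
  Multiset.single_le_sum (fun _ hx => by
    obtain ⟨p', -, rfl⟩ := Multiset.mem_map.mp hx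
    exact pow_nonneg hc _) _ (Multiset.mem_map_of_mem _ hp)

theorem sum_fiberWeight {A : Type*} [Fintype A] [DecidableEq A] (c : ℝ)
    (κ : Set (X → Y) × ℕ → A) (E : Multiset (Set (X → Y) × ℕ)) :
    ∑ g, fiberWeight c κ g E = expertWeight c E := by
  induction E using Multiset.induction_on with
  | empty => simp [fiberWeight, expertWeight]
  | cons p E ih =>
    simp only [fiberWeight, expertWeight, Multiset.map_cons, Multiset.sum_cons] at ih ⊢
    rw [Finset.sum_add_distrib, ih, Finset.sum_ite_eq]
    simp

theorem exists_expertWeight_le_card_mul_fiberWeight {A : Type*} [Fintype A] [Nonempty A]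
    [DecidableEq A] (c : ℝ) (κ : Set (X → Y) × ℕ → A) (E : Multiset (Set (X → Y) × ℕ)) :
    ∃ g, expertWeight c E ≤ Fintype.card A * fiberWeight c κ g E := by
  have hA : (0 : ℝ) < Fintype.card A := Nat.cast_pos.mpr Fintype.card_pos
  obtain ⟨g, -, hg⟩ := Finset.exists_le_of_sum_le Finset.univ_nonempty
    (f := fun _ => expertWeight c E / Fintype.card A) (g := fun g => fiberWeight c κ g E)
    (by simp [sum_fiberWeight, mul_div_cancel₀ _ hA.ne'])
  exact ⟨g, (div_le_iff₀' hA).mp hg⟩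

/-- Experts that did not predict `g` are kept as they are: they only have to cover the
version space, not to be contained in it. -/
def splitExperts [Fintype Y] [DecidableEq Y] (κ : Set (X → Y) × ℕ → (Fin r → Y))
    (q : Fin r → X) (g : Fin r → Y) (E : Multiset (Set (X → Y) × ℕ)) : Multiset (Set (X → Y) × ℕ) :=
  E.bind fun p => if κ p = g then
    (Finset.univ.erase g).val.map fun u => (tupleFiber p.1 q u, p.2 + 1) else {p}

theorem expertWeight_splitExperts [Fintype Y] [DecidableEq Y] (c : ℝ)
    (κ : Set (X → Y) × ℕ → (Fin r → Y)) (q : Fin r → X) (g : Fin r → Y)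
    (E : Multiset (Set (X → Y) × ℕ)) :
    expertWeight c (splitExperts κ q g E) = expertWeight c E
      - (1 - (Fintype.card (Fin r → Y) - 1) * c) * fiberWeight c κ g E := by
  have hcard : ((Finset.univ.erase g).card : ℝ) = Fintype.card (Fin r → Y) - 1 := by
    rw [Finset.card_erase_of_mem (Finset.mem_univ g), Finset.card_univ,
      Nat.cast_pred (Fintype.card_pos_iff.mpr ⟨g⟩)]
  calc expertWeight c (splitExperts κ q g E)
      = (E.map fun p => c ^ p.2 - (1 - (Fintype.card (Fin r → Y) - 1) * c)
          * if κ p = g then c ^ p.2 else 0).sum := by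
        rw [expertWeight, splitExperts, Multiset.map_bind, Multiset.sum_bind]
        congr 1
        refine Multiset.map_congr rfl fun p _ => ?_
        split_ifs
        · simp only [Multiset.map_map, Function.comp_def]
          rw [Multiset.map_const', Multiset.sum_replicate, Finset.card_val, nsmul_eq_mul, hcard]
          ring
        · simp
    _ = _ := by rw [Multiset.sum_map_sub, Multiset.sum_map_mul_left]; rfl

theorem expertWeight_splitExperts_le [Fintype Y] [DecidableEq Y] {c a : ℝ} (hc : 0 ≤ c)
    (ha : a + (Fintype.card (Fin r → Y) - 1) * c ≤ 1) (ha0 : 0 ≤ a)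
    {κ : Set (X → Y) × ℕ → (Fin r → Y)} (q : Fin r → X) {g : Fin r → Y}
    {E : Multiset (Set (X → Y) × ℕ)}
    (hg : expertWeight c E ≤ Fintype.card (Fin r → Y) * fiberWeight c κ g E) :
    expertWeight c (splitExperts κ q g E) ≤
      (1 - a / Fintype.card (Fin r → Y)) * expertWeight c E := by
  rw [expertWeight_splitExperts]
  set K : ℝ := (Fintype.card (Fin r → Y) : ℝ)
  have hK : 0 < K := Nat.cast_pos.mpr (Fintype.card_pos_iff.mpr ⟨g⟩)
  have hψ := expertWeight_nonneg hc E
  have hS : expertWeight c E / K ≤ fiberWeight c κ g E := (div_le_iff₀' hK).mpr hg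
  have hS0 : 0 ≤ fiberWeight c κ g E := (div_nonneg hψ hK.le).trans hS
  rw [show (1 - a / K) * expertWeight c E = expertWeight c E - a * (expertWeight c E / K) by ring]
  nlinarith [mul_le_mul_of_nonneg_left hS ha0]

/-- Only nonempty subclasses are bounded: a split may create empty ones, whose `opt_std` is `0`
without having dropped. -/
def ExpertsValid (F : Set (X → Y)) (E : Multiset (Set (X → Y) × ℕ)) : Prop :=
  ∀ p ∈ E, p.1 ⊆ F ∧ (p.1.Nonempty → p.2 + optStd p.1 ≤ optStd F)

def ExpertsCover (E : Multiset (Set (X → Y) × ℕ)) (V : Set (X → Y)) : Prop :=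
  ∀ f ∈ V, ∃ p ∈ E, f ∈ p.1

theorem ExpertsValid.splitExperts [Fintype Y] [DecidableEq Y] {F : Set (X → Y)}
    {E : Multiset (Set (X → Y) × ℕ)} (hE : ExpertsValid F E)
    {κ : Set (X → Y) × ℕ → (Fin r → Y)} {q : Fin r → X} (g : Fin r → Y)
    (hκ : ∀ p ∈ E, ∀ u ≠ κ p, (tupleFiber p.1 q u).Nonempty →
      optStd (tupleFiber p.1 q u) < optStd p.1) :
    ExpertsValid F (splitExperts κ q g E) := by
  intro p' hp'
  obtain ⟨p, hpE, hp'⟩ := Multiset.mem_bind.mp hp'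
  obtain ⟨hpF, hpopt⟩ := hE p hpE
  split_ifs at hp' with hpg
  · obtain ⟨u, hu, rfl⟩ := Multiset.mem_map.mp hp'
    have hug : u ≠ κ p := hpg ▸ Finset.ne_of_mem_erase hu
    refine ⟨(tupleFiber_subset _ _ _).trans hpF, fun hne => ?_⟩
    have := hκ p hpE u hug hne
    have := hpopt (hne.mono (tupleFiber_subset _ _ _))
    dsimp only
    omega
  · rw [Multiset.mem_singleton.mp hp']
    exact ⟨hpF, hpopt⟩

theorem ExpertsCover.splitExperts [Fintype Y] [DecidableEq Y] {E : Multiset (Set (X → Y) × ℕ)}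
    {V : Set (X → Y)} (hE : ExpertsCover E V) (κ : Set (X → Y) × ℕ → (Fin r → Y))
    (q : Fin r → X) (g : Fin r → Y) :
    ExpertsCover (splitExperts κ q g E) {f ∈ V | ¬ ∀ i, f (q i) = g i} := by
  rintro f ⟨hfV, hfg⟩
  obtain ⟨p, hpE, hfp⟩ := hE f hfV
  by_cases hpg : κ p = g
  · refine ⟨(tupleFiber p.1 q (f ∘ q), p.2 + 1), Multiset.mem_bind.mpr ⟨p, hpE, ?_⟩,
      hfp, fun _ => rfl⟩
    rw [if_pos hpg]
    exact Multiset.mem_map.mpr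
      ⟨f ∘ q, Finset.mem_erase.mpr ⟨fun h => hfg (congrFun h), Finset.mem_univ _⟩, rfl⟩
  · refine ⟨p, Multiset.mem_bind.mpr ⟨p, hpE, ?_⟩, hfp⟩
    rw [if_neg hpg]
    exact Multiset.mem_singleton_self p

end Experts

section WeakBound

variable {X : Type u} {Y : Type v} [Fintype Y] [DecidableEq Y] [Nonempty Y] {r : ℕ}

theorem pow_optStd_le_mul_expertWeight {F : Set (X → Y)} (hF : F.Finite) {c a : ℝ}
    (hc0 : 0 ≤ c) (hc1 : c ≤ 1) (ha0 : 0 ≤ a)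
    (ha : a + (Fintype.card (Fin r → Y) - 1) * c ≤ 1) {V : Set (X → Y)} {m : ℕ}
    (hG : GuessForce (fun (x : Fin r → X) (g : Fin r → Y) f => ∀ i, f (x i) = g i) V m)
    {E : Multiset (Set (X → Y) × ℕ)} (hE : ExpertsValid F E) (hcov : ExpertsCover E V) :
    c ^ optStd F ≤ (1 - a / Fintype.card (Fin r → Y)) ^ m * expertWeight c E := by
  set K : ℝ := (Fintype.card (Fin r → Y) : ℝ)
  have hK : 1 ≤ K := Nat.one_le_cast.mpr Fintype.card_pos
  have hrate : 0 ≤ 1 - a / K := by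
    rw [sub_nonneg, div_le_one (by positivity)]
    nlinarith
  induction hG generalizing E with
  | zero V hV =>
    obtain ⟨f, hf⟩ := hV
    obtain ⟨p, hpE, hfp⟩ := hcov f hf
    have hp := (hE p hpE).2 ⟨f, hfp⟩
    calc c ^ optStd F ≤ c ^ p.2 := pow_le_pow_of_le_one hc0 hc1 (by omega)
      _ ≤ expertWeight c E := pow_le_expertWeight hc0 hpE
      _ = (1 - a / K) ^ 0 * expertWeight c E := by rw [pow_zero, one_mul]
  | step V m q b _ _ ih =>
    choose! κ hκ using fun (p : Set (X → Y) × ℕ) (hp : p.1 ⊆ F) =>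
      exists_optStd_tupleFiber_lt (hF.subset hp) q
    obtain ⟨g, hg⟩ := exists_expertWeight_le_card_mul_fiberWeight c κ E
    have ihg := @ih g
    cases hbg : b g
    · simp only [hbg, Bool.false_eq_true, if_false] at ihg
      exact ihg hE fun f hf => hcov f hf.1
    · simp only [hbg, if_true] at ihg
      calc c ^ optStd F
          ≤ (1 - a / K) ^ m * expertWeight c (splitExperts κ q g E) :=
            ihg (hE.splitExperts g fun p hp => hκ p (hE p hp).1) (hcov.splitExperts κ q g)
        _ ≤ (1 - a / K) ^ m * ((1 - a / K) * expertWeight c E) :=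
            mul_le_mul_of_nonneg_left (expertWeight_splitExperts_le hc0 ha ha0 q hg)
              (pow_nonneg hrate _)
        _ = (1 - a / K) ^ (m + 1) * expertWeight c E := by ring

theorem mul_le_mul_log_inv_of_pow_le {a c : ℝ} {s m : ℕ} (hc : 0 < c) (ha : a < 1)
    (h : c ^ s ≤ (1 - a) ^ m) : m * a ≤ s * Real.log c⁻¹ := by
  have hlog := Real.log_le_log (pow_pos hc s) h
  rw [Real.log_pow, Real.log_pow] at hlog
  have hlog1 : Real.log (1 - a) ≤ -a := by
    linarith [Real.log_le_sub_one_of_pos (sub_pos.mpr ha)]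
  rw [Real.log_inv]
  nlinarith [mul_le_mul_of_nonneg_left hlog1 (Nat.cast_nonneg (α := ℝ) m)]

theorem natCast_sSup_le {S : Set ℕ} {B : ℝ} (hB : 0 ≤ B) (h : ∀ m ∈ S, (m : ℝ) ≤ B) :
    ((sSup S : ℕ) : ℝ) ≤ B :=
  (Nat.cast_le.mpr (csSup_le' fun m hm => Nat.le_floor (h m hm))).trans (Nat.floor_le hB)

theorem optWeakCart_le {F : Set (X → Y)} (hF : F.Finite) {η : ℝ} (hη0 : 0 < η) (hη1 : η < 1) :
    (optWeakCart r F : ℝ) ≤ Fintype.card (Fin r → Y) *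
      Real.log (Fintype.card (Fin r → Y) / η) / (1 - η) * optStd F := by
  set K : ℝ := (Fintype.card (Fin r → Y) : ℝ)
  have hK : 1 ≤ K := Nat.one_le_cast.mpr Fintype.card_pos
  have hK0 : 0 < K := by linarith
  have hη : 0 < 1 - η := sub_pos.mpr hη1
  have hlogK : 0 ≤ Real.log (K / η) := Real.log_nonneg ((one_le_div hη0).mpr (by linarith))
  refine natCast_sSup_le (by positivity) fun m hG => ?_
  have hpow : (η / K) ^ optStd F ≤ (1 - (1 - η) / K) ^ m := by
    have ha : 1 - η + (K - 1) * (η / K) ≤ 1 := by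
      have : (K - 1) * (η / K) = η - η / K := by field_simp
      linarith [div_pos hη0 hK0]
    simpa only [expertWeight, Multiset.map_singleton, Multiset.sum_singleton, pow_zero,
      mul_one] using pow_optStd_le_mul_expertWeight hF (div_pos hη0 hK0).le
      ((div_le_one hK0).mpr (by linarith)) hη.le ha hG (E := {(F, 0)})
      (fun p hp => by rw [Multiset.mem_singleton.mp hp]; simp)
      (fun f hf => ⟨(F, 0), Multiset.mem_singleton_self _, hf⟩)
  have hm := mul_le_mul_log_inv_of_pow_le (div_pos hη0 hK0)
    ((div_lt_one hK0).mpr (by linarith)) hpow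
  rw [inv_div] at hm
  have hmK : (m : ℝ) * (1 - η) ≤ K * Real.log (K / η) * optStd F := by
    calc (m : ℝ) * (1 - η) = K * (m * ((1 - η) / K)) := by field_simp
      _ ≤ K * (optStd F * Real.log (K / η)) := mul_le_mul_of_nonneg_left hm hK0.le
      _ = K * Real.log (K / η) * optStd F := by ring
  rw [div_mul_eq_mul_div, le_div_iff₀ hη]
  exact hmK

end WeakBound

/-- With `η = ε / (2 (1 + ε))` one has `(1 + ε) (1 - η) = 1 + ε / 2`, and the extra
`log η⁻¹ / log K` is at most `ε / 2` once `K ≥ exp ((2 / ε) log η⁻¹)`. -/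
theorem exists_log_div_le {ε : ℝ} (hε : 0 < ε) : ∃ η : ℝ, 0 < η ∧ η < 1 ∧ ∃ k₀ : ℕ, 0 < k₀ ∧
    ∀ K : ℝ, k₀ ≤ K → Real.log (K / η) / (1 - η) ≤ (1 + ε) * Real.log K := by
  set η := ε / (2 * (1 + ε)) with hηdef
  have hη0 : 0 < η := by positivity
  have hη1 : η < 1 := by rw [div_lt_one (by positivity)]; linarith
  have hη : (1 + ε) * (1 - η) = 1 + ε / 2 := by rw [hηdef]; field_simp; ring
  refine ⟨η, hη0, hη1, ⌈Real.exp (2 / ε * Real.log η⁻¹)⌉₊,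
    Nat.ceil_pos.mpr (Real.exp_pos _), fun K hK => ?_⟩
  have hexp : Real.exp (2 / ε * Real.log η⁻¹) ≤ K := (Nat.le_ceil _).trans hK
  have hK0 : 0 < K := (Real.exp_pos _).trans_le hexp
  have hlog : 2 / ε * Real.log η⁻¹ ≤ Real.log K := (Real.le_log_iff_exp_le hK0).mpr hexp
  have hlogη : Real.log η⁻¹ ≤ ε / 2 * Real.log K := by
    rw [div_mul_eq_mul_div, div_le_iff₀ hε] at hlog
    linarith
  rw [div_le_iff₀ (sub_pos.mpr hη1), mul_assoc, mul_comm (Real.log K), ← mul_assoc, hη,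
    div_eq_mul_inv, Real.log_mul hK0.ne' (inv_ne_zero hη0.ne')]
  linarith

/-- Let `r ≥ 1`. For every `ε > 0` there exists `k₀` such that for every
finite set `Y` with `|Y| = k ≥ k₀`, every set `X`, and every finite class `F` of functions
from `X` to `Y`, `opt_weak(CART_r(F)) ≤ (1+ε)·(k^r·r·ln k)·opt_std(F)`. -/
theorem stmt9 (r : ℕ) (hr : 1 ≤ r) (ε : ℝ) (hε : 0 < ε) :
    ∃ k₀ : ℕ, ∀ (X : Type u) (Y : Type v) [Fintype Y], k₀ ≤ Fintype.card Y →
      ∀ F : Set (X → Y), F.Finite →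
      (optWeakCart r F : ℝ) ≤
        (1 + ε) * ((Fintype.card Y : ℝ) ^ r * r * Real.log (Fintype.card Y))
          * (optStd F : ℝ) := by
  obtain ⟨η, hη0, hη1, k₀, hk₀, hlog⟩ := exists_log_div_le hε
  refine ⟨k₀, fun X Y _ hk F hF => ?_⟩
  classical
  have : Nonempty Y := Fintype.card_pos_iff.mp (hk₀.trans_le hk)
  have hK : ((Fintype.card (Fin r → Y) : ℕ) : ℝ) = (Fintype.card Y : ℝ) ^ r := by simp
  have hkK : (k₀ : ℝ) ≤ (Fintype.card Y : ℝ) ^ r :=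
    (Nat.cast_le.mpr hk).trans (le_self_pow₀ (Nat.one_le_cast.mpr Fintype.card_pos) (by omega))
  calc (optWeakCart r F : ℝ)
      ≤ (Fintype.card Y : ℝ) ^ r * (Real.log ((Fintype.card Y : ℝ) ^ r / η) / (1 - η))
        * optStd F := by rw [← hK, mul_div_assoc']; exact optWeakCart_le hF hη0 hη1
    _ ≤ (Fintype.card Y : ℝ) ^ r * ((1 + ε) * Real.log ((Fintype.card Y : ℝ) ^ r))
        * optStd F := by gcongr; exact hlog _ hkK
    _ = _ := by rw [Real.log_pow]; ring
end

section
/- Let r > 1 and let F be a set of permutations of {1,…,n} with |F| ≥ 2. Then opt_weak,<,r(F) < r!·ln(|F|). -/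
/-- `opt_weak,<,r(F)`: the order model. In each round the adversary chooses `r` distinct
inputs, and the learner guesses the permutation of `{1,…,r}` order-isomorphic to the values
of the target permutation at these inputs; weak reinforcement. -/
noncomputable def optOrder (n r : ℕ) (F : Set (Equiv.Perm (Fin n))) : ℕ :=
  sSup {m | GuessForce
    (fun (x : {x : Fin r → Fin n // Function.Injective x}) (σ : Equiv.Perm (Fin r)) f =>
      ∀ i j, σ i < σ j ↔ f (x.1 i) < f (x.1 j)) F m}

/-
Play against the learner that always guesses an answer shared by at least a `1/K` share of the
current version space, `K = r!` being the number of answers. Each "no" then shrinks the version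
space by a factor `1 - 1/K`, a "yes" never enlarges it, and the version space stays nonempty, so
`K^m ≤ (K-1)^m |F|` for every forcible `m`; `1 - 1/K < exp(-1/K)` turns this into `m < K log |F|`.
-/

open Real

lemma exists_perm_lt_iff_lt {β : Type*} [LinearOrder β] {r : ℕ} (y : Fin r → β)
    (hy : Function.Injective y) :
    ∃ σ : Equiv.Perm (Fin r), ∀ i j, σ i < σ j ↔ y i < y j := by
  have hsorted : StrictMono (y ∘ Tuple.sort y) :=
    (Tuple.monotone_sort y).strictMono_of_injective (hy.comp (Tuple.sort y).injective)
  refine ⟨(Tuple.sort y).symm, fun i j => ?_⟩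
  simpa [Function.comp] using
    (hsorted.lt_iff_lt (a := (Tuple.sort y).symm i) (b := (Tuple.sort y).symm j)).symm

lemma cast_lt_mul_log_of_pow_le {K N : ℝ} {m : ℕ} (hK : 1 ≤ K) (hN : 1 < N)
    (h : K ^ m ≤ (K - 1) ^ m * N) : (m : ℝ) < K * log N := by
  have hK0 : 0 < K := by linarith
  rcases Nat.eq_zero_or_pos m with rfl | hm
  · simpa using mul_pos hK0 (log_pos hN)
  have hstep : K - 1 < K * exp (-(1 / K)) := by
    have := add_one_lt_exp (neg_ne_zero.2 (one_div_pos.2 hK0).ne')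
    calc K - 1 = K * (-(1 / K) + 1) := by field_simp; ring
      _ < K * exp (-(1 / K)) := mul_lt_mul_of_pos_left this hK0
  have hpow : (K - 1) ^ m < K ^ m * exp (-(m / K)) := by
    calc (K - 1) ^ m < (K * exp (-(1 / K))) ^ m := pow_lt_pow_left₀ hstep (by linarith) hm.ne'
      _ = K ^ m * exp (-(m / K)) := by rw [mul_pow, ← exp_nat_mul]; ring_nf
  have hone : 1 < exp (-(m / K)) * N := by
    refine lt_of_mul_lt_mul_left ?_ (pow_pos hK0 m).le
    calc K ^ m * 1 ≤ (K - 1) ^ m * N := by rwa [mul_one]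
      _ < K ^ m * exp (-(m / K)) * N := mul_lt_mul_of_pos_right hpow (by linarith)
      _ = K ^ m * (exp (-(m / K)) * N) := mul_assoc _ _ _
  have hlog := log_lt_log one_pos hone
  rw [log_one, log_mul (exp_pos _).ne' (by linarith), log_exp] at hlog
  rw [← div_lt_iff₀' hK0]
  linarith

lemma Nat.cast_sSup_lt {S : Set ℕ} {x : ℝ} (hS : S.Nonempty) (h : ∀ m ∈ S, (m : ℝ) < x) :
    ((sSup S : ℕ) : ℝ) < x :=
  h _ (Nat.sSup_mem hS ⟨⌈x⌉₊, fun m hm => (Nat.lt_ceil.2 (h m hm)).le⟩)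

section VersionSpace

variable {α A : Type*} [Finite α] {V : Set α}

lemma Set.ncard_le_sum_ncard_sep [Fintype A] {p : A → α → Prop} (hcov : ∀ f ∈ V, ∃ g, p g f) :
    V.ncard ≤ ∑ g, {f ∈ V | p g f}.ncard := by
  calc V.ncard ≤ (⋃ g ∈ Finset.univ, {f ∈ V | p g f}).ncard := by
        refine Set.ncard_le_ncard (fun f hf => ?_)
        obtain ⟨g, hg⟩ := hcov f hf
        exact Set.mem_biUnion (Finset.mem_univ g) ⟨hf, hg⟩
    _ ≤ ∑ g, {f ∈ V | p g f}.ncard := Finset.set_ncard_biUnion_le _ _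

lemma Set.exists_ncard_le_card_mul_ncard_sep [Fintype A] [Nonempty A] {p : A → α → Prop}
    (hcov : ∀ f ∈ V, ∃ g, p g f) :
    ∃ g, V.ncard ≤ Fintype.card A * {f ∈ V | p g f}.ncard := by
  obtain ⟨g, -, hg⟩ := Finset.exists_le_of_sum_le (s := Finset.univ)
    (f := fun _ => V.ncard) (g := fun g => Fintype.card A * {f ∈ V | p g f}.ncard)
    Finset.univ_nonempty (by
      simpa [← Finset.mul_sum] using Nat.mul_le_mul_left _ (Set.ncard_le_sum_ncard_sep hcov))
  exact ⟨g, hg⟩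

lemma Set.mul_ncard_sep_not_le {p : α → Prop} {K : ℕ} (h : V.ncard ≤ K * {f ∈ V | p f}.ncard) :
    K * {f ∈ V | ¬ p f}.ncard ≤ (K - 1) * V.ncard := by
  have hsplit : {f ∈ V | p f}.ncard + {f ∈ V | ¬ p f}.ncard = V.ncard :=
    Set.ncard_inter_add_ncard_sdiff_eq_ncard V {f | p f}
  have hK : K * {f ∈ V | p f}.ncard + K * {f ∈ V | ¬ p f}.ncard = K * V.ncard := by
    rw [← mul_add, hsplit]
  rw [Nat.sub_one_mul]
  omega

end VersionSpace

theorem GuessForce.card_pow_le_mul_ncard {α Q A : Type*} [Finite α] [Fintype A] [Nonempty A]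
    {ok : Q → A → α → Prop} (hcov : ∀ q f, ∃ g, ok q g f) {V : Set α} {m : ℕ}
    (h : GuessForce ok V m) :
    Fintype.card A ^ m ≤ (Fintype.card A - 1) ^ m * V.ncard := by
  induction h with
  | zero V hne =>
    rw [pow_zero, pow_zero, one_mul]
    exact (Set.ncard_pos V.toFinite).2 hne
  | step V m q c _ _ ih =>
    set K := Fintype.card A
    obtain ⟨g, hg⟩ := Set.exists_ncard_le_card_mul_ncard_sep (fun f _ => hcov q f) (V := V)
    have ihg := ih g
    cases hc : c g <;> simp only [hc, Bool.false_eq_true, if_true, if_false] at ihg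
    · calc K ^ (m + 1) ≤ (K - 1) ^ (m + 1) * {f ∈ V | ok q g f}.ncard := ihg
        _ ≤ (K - 1) ^ (m + 1) * V.ncard :=
          Nat.mul_le_mul_left _ (Set.ncard_le_ncard (fun f hf => hf.1))
    · calc K ^ (m + 1) = K * K ^ m := pow_succ' K m
        _ ≤ K * ((K - 1) ^ m * {f ∈ V | ¬ ok q g f}.ncard) := Nat.mul_le_mul_left _ ihg
        _ = (K - 1) ^ m * (K * {f ∈ V | ¬ ok q g f}.ncard) := by ring
        _ ≤ (K - 1) ^ m * ((K - 1) * V.ncard) :=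
          Nat.mul_le_mul_left _ (Set.mul_ncard_sep_not_le hg)
        _ = (K - 1) ^ (m + 1) * V.ncard := by ring

theorem stmt11_general (n r : ℕ) (F : Set (Equiv.Perm (Fin n))) (hF : 2 ≤ F.ncard) :
    (optOrder n r F : ℝ) < (r.factorial : ℝ) * Real.log F.ncard := by
  refine Nat.cast_sSup_lt ⟨0, GuessForce.zero F (Set.nonempty_of_ncard_ne_zero (by omega))⟩ ?_
  intro m hm
  have hpow := GuessForce.card_pow_le_mul_ncard (V := F) (m := m)
    (fun (x : {x : Fin r → Fin n // Function.Injective x}) (f : Equiv.Perm (Fin n)) =>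
      exists_perm_lt_iff_lt (fun i => f (x.1 i)) (f.injective.comp x.2)) hm
  rw [Fintype.card_perm, Fintype.card_fin] at hpow
  have hpowℝ : (r.factorial : ℝ) ^ m ≤ ((r.factorial : ℝ) - 1) ^ m * F.ncard := by
    have := Nat.cast_le (α := ℝ).2 hpow
    push_cast [Nat.cast_sub r.factorial_pos] at this
    exact this
  exact cast_lt_mul_log_of_pow_le (by exact_mod_cast r.factorial_pos) (by exact_mod_cast hF) hpowℝ

/-- Let `r > 1` and let `F` be a set of permutations of `{1,…,n}` with
`|F| ≥ 2`. Then `opt_weak,<,r(F) < r!·ln |F|`. -/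
theorem stmt11 (n r : ℕ) (hr : 1 < r) (F : Set (Equiv.Perm (Fin n))) (hF : 2 ≤ F.ncard) :
    (optOrder n r F : ℝ) < (r.factorial : ℝ) * Real.log F.ncard :=
  stmt11_general n r F hF
end
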